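/- An alternating automaton A is good for trees if and only if it is good for composition with one-player games, i.e., if and only if for every one-player Σ-arena R (possibly infinite), Eve has a winning strategy in the game on R with winning condition L(A) if and only if she has a winning strategy in the synchronized product R × A. -/

import Mathlib

set_option maxHeartbeats 1000000

namespace GFG

/-- Positive boolean formulas over `Q`. -/
inductive PB (Q : Type) : Type
  | atom : Q → PB Q
  | and : PB Q → PB Q → PB Q
  | or : PB Q → PB Q → PB Q

namespace PB
variable {Q R : Type}

/-- Satisfaction of a positive boolean formula by a truth assignment. -/
def sat : PB Q → (Q → Prop) → Prop
  | atom q, v => v q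
  | and b b', v => b.sat v ∧ b'.sat v
  | or b b', v => b.sat v ∨ b'.sat v

/-- Two positive boolean formulas are equivalent if they are satisfied by exactly
the same truth assignments. -/
def Equiv (b b' : PB Q) : Prop := ∀ v : Q → Prop, b.sat v ↔ b'.sat v

/-- Dualization: swap conjunctions and disjunctions. -/
def dual : PB Q → PB Q
  | atom q => atom q
  | and b b' => or b.dual b'.dual
  | or b b' => and b.dual b'.dual

/-- The formula is a conjunction of atoms. -/
def IsConj : PB Q → Prop
  | atom _ => True
  | and b b' => b.IsConj ∧ b'.IsConj
  | or _ _ => False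

/-- The formula is a disjunction of atoms. -/
def IsDisj : PB Q → Prop
  | atom _ => True
  | and _ _ => False
  | or b b' => b.IsDisj ∧ b'.IsDisj

/-- The formula is a single atom. -/
def IsAtom : PB Q → Prop
  | atom _ => True
  | _ => False

/-- The formula is in disjunctive normal form: a disjunction of conjunctions of atoms. -/
def IsDNF : PB Q → Prop
  | atom _ => True
  | and b b' => b.IsConj ∧ b'.IsConj
  | or b b' => b.IsDNF ∧ b'.IsDNF

/-- The set of atoms occurring in a formula. -/
def atomsOf : PB Q → Set Q
  | atom q => {q}
  | and b b' => b.atomsOf ∪ b'.atomsOf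
  | or b b' => b.atomsOf ∪ b'.atomsOf

/-- `some q` if the formula is the atom `q`, else `none`. -/
def theAtom? : PB Q → Option Q
  | atom q => some q
  | _ => none

/-- Substitution of formulas for atoms. -/
def bind : PB Q → (Q → PB R) → PB R
  | atom q, f => f q
  | and b b', f => and (b.bind f) (b'.bind f)
  | or b b', f => or (b.bind f) (b'.bind f)

/-- The list of subformulas of a formula. -/
def subs : PB Q → List (PB Q)
  | atom q => [atom q]
  | and b b' => and b b' :: (b.subs ++ b'.subs)
  | or b b' => or b b' :: (b.subs ++ b'.subs)

end PB

/-- A deterministic parity automaton over the alphabet `Γ`. -/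
structure DPA (Γ : Type) : Type 1 where
  P : Type
  [finP : Finite P]
  [neP : Nonempty P]
  p0 : P
  eta : P → Γ → P
  c : P → ℕ

attribute [instance] DPA.finP DPA.neP

/-- The run of a deterministic parity automaton on an infinite word. -/
def DPA.run {Γ : Type} (D : DPA Γ) (x : ℕ → Γ) : ℕ → D.P
  | 0 => D.p0
  | n + 1 => D.eta (D.run x n) (x n)

/-- A deterministic parity automaton accepts `x` iff the largest priority seen
infinitely often along the run is even. -/
def DPA.Accepts {Γ : Type} (D : DPA Γ) (x : ℕ → Γ) : Prop :=
  ∃ k, Even k ∧ {n | D.c (D.run x n) = k}.Infinite ∧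
    ∀ j, k < j → {n | D.c (D.run x n) = j}.Finite

/-- A set of infinite words over `Γ` is ω-regular iff it is recognized by some
deterministic parity automaton. -/
def OmegaRegular {Γ : Type} (W : Set (ℕ → Γ)) : Prop :=
  ∃ D : DPA Γ, ∀ x, x ∈ W ↔ D.Accepts x

/-- An alternating word automaton with states labeled into `Γ` and acceptance set
`W ⊆ Γ^ω`. -/
structure AltAutomaton (Sig Γ : Type) : Type 1 where
  Q : Type
  [finQ : Finite Q]
  [neQ : Nonempty Q]
  init : Q
  delta : Q → Sig → PB Q
  label : Q → Γ
  W : Set (ℕ → Γ)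

attribute [instance] AltAutomaton.finQ AltAutomaton.neQ

/-- A two-player win/lose game of infinite duration, given by a move relation,
ownership of positions (`eve p` iff `p` belongs to Eve), an initial position, and
a winning condition for Eve on plays. -/
structure Game (Pos : Type) where
  move : Pos → Pos → Prop
  eve : Pos → Prop
  init : Pos
  win : (ℕ → Pos) → Prop

namespace Game
variable {Pos : Type} (G : Game Pos)

/-- A play: an infinite sequence of successive positions starting at the initial position. -/
def IsPlay (p : ℕ → Pos) : Prop := p 0 = G.init ∧ ∀ n, G.move (p n) (p (n + 1))

/-- The history of a play up to (and including) time `n`. -/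
def histOf (p : ℕ → Pos) (n : ℕ) : List Pos := (List.range (n + 1)).map p

/-- A valid finite history: a finite sequence of successive positions from the
initial position. -/
def IsHist (l : List Pos) : Prop := l.head? = some G.init ∧ l.Chain' G.move

/-- The play `p` agrees with the strategy `σ` of Eve. -/
def AgreesE (σ : List Pos → Pos) (p : ℕ → Pos) : Prop :=
  ∀ n, G.eve (p n) → p (n + 1) = σ (histOf p n)

/-- The play `p` agrees with the strategy `σ` of Adam. -/
def AgreesA (σ : List Pos → Pos) (p : ℕ → Pos) : Prop :=
  ∀ n, ¬ G.eve (p n) → p (n + 1) = σ (histOf p n)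

/-- `σ` is a winning strategy for Eve: it proposes legal moves at all of Eve's
positions reachable along valid histories, and every play agreeing with it is won by Eve. -/
def WinsEve (σ : List Pos → Pos) : Prop :=
  (∀ (l : List Pos) (x : Pos), G.IsHist (l ++ [x]) → G.eve x → G.move x (σ (l ++ [x]))) ∧
  (∀ p, G.IsPlay p → G.AgreesE σ p → G.win p)

/-- `σ` is a winning strategy for Adam. -/
def WinsAdam (σ : List Pos → Pos) : Prop :=
  (∀ (l : List Pos) (x : Pos), G.IsHist (l ++ [x]) → ¬ G.eve x → G.move x (σ (l ++ [x]))) ∧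
  (∀ p, G.IsPlay p → G.AgreesA σ p → ¬ G.win p)

/-- Eve has a winning strategy in `G`. -/
def EveWins : Prop := ∃ σ, G.WinsEve σ

/-- Adam has a winning strategy in `G`. -/
def AdamWins : Prop := ∃ σ, G.WinsAdam σ

end Game

/-- `s` is the subsequence of values selected by `sel` along `p`,
in order and exhaustively. -/
def IsSubseqOn {X Y : Type} (sel : X → Option Y) (p : ℕ → X) (s : ℕ → Y) : Prop :=
  ∃ ix : ℕ → ℕ, StrictMono ix ∧ (∀ n, sel (p (ix n)) = some (s n)) ∧
    ∀ m, (sel (p m)).isSome → ∃ n, ix n = m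

variable {Sig Gam : Type}

/-- Moves of the model-checking game `G(w, A)`. -/
def mcMove (A : AltAutomaton Sig Gam) (w : ℕ → Sig) :
    (ℕ × PB A.Q) → (ℕ × PB A.Q) → Prop
  | (i, PB.atom q), (j, b) => j = i + 1 ∧ b = A.delta q (w i)
  | (i, PB.and b b'), (j, c) => j = i ∧ (c = b ∨ c = b')
  | (i, PB.or b b'), (j, c) => j = i ∧ (c = b ∨ c = b')

/-- The model-checking (membership) game `G(w, A)`. Disjunction positions belong to Eve;
conjunction and atom positions (the latter having a unique successor) belong to Adam.
Eve wins a play iff its state-sequence satisfies the acceptance condition. -/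
def mcGame (A : AltAutomaton Sig Gam) (w : ℕ → Sig) : Game (ℕ × PB A.Q) where
  move := mcMove A w
  eve := fun p => match p.2 with
    | PB.or _ _ => True
    | _ => False
  init := (0, PB.atom A.init)
  win := fun p => ∀ ρ : ℕ → A.Q, IsSubseqOn (fun x => x.2.theAtom?) p ρ →
    (fun n => A.label (ρ n)) ∈ A.W

/-- `A` accepts `w` iff Eve has a winning strategy in the model-checking game. -/
def AltAutomaton.Accepts (A : AltAutomaton Sig Gam) (w : ℕ → Sig) : Prop :=
  (mcGame A w).EveWins

/-- The language of `A`. -/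
def AltAutomaton.lang (A : AltAutomaton Sig Gam) : Set (ℕ → Sig) :=
  {w | A.Accepts w}

/-- A uniform strategy: a function of the word prefix read so far and the sequence of
transition conditions visited so far. -/
abbrev UStrat (Sig Q : Type) := List Sig → List (PB Q) → PB Q

/-- The prefix `w₀ … w_{i-1}` of an infinite word. -/
def wordPrefix (w : ℕ → Sig) (i : ℕ) : List Sig := (List.range i).map w

/-- The strategy in the model-checking game `G(w, A)` induced by following the uniform
strategy `τ` (at atom positions it takes the unique move). -/
def follow (A : AltAutomaton Sig Gam) (w : ℕ → Sig) (τ : UStrat Sig A.Q)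
    (hs : List (ℕ × PB A.Q)) : ℕ × PB A.Q :=
  match hs.getLast?.getD (0, PB.atom A.init) with
  | (i, PB.atom q) => (i + 1, A.delta q (w i))
  | (i, PB.and _ _) => (i, τ (wordPrefix w i) (hs.map Prod.snd))
  | (i, PB.or _ _) => (i, τ (wordPrefix w i) (hs.map Prod.snd))

/-- The nondeterminism in `A` is history-deterministic. -/
def NondetHD (A : AltAutomaton Sig Gam) : Prop :=
  ∃ τ : UStrat Sig A.Q, ∀ w ∈ A.lang, (mcGame A w).WinsEve (follow A w τ)

/-- The universality in `A` is history-deterministic. -/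
def UnivHD (A : AltAutomaton Sig Gam) : Prop :=
  ∃ τ : UStrat Sig A.Q, ∀ w ∉ A.lang, (mcGame A w).WinsAdam (follow A w τ)

/-- `A` is history-deterministic. -/
def HistoryDet (A : AltAutomaton Sig Gam) : Prop := NondetHD A ∧ UnivHD A

/-- Moves of the letter games: at an atom a letter is picked and the transition condition
is unfolded, at conjunctions and disjunctions a subformula is picked (with empty letter). -/
def letterMove (A : AltAutomaton Sig Gam) :
    (Option Sig × PB A.Q) → (Option Sig × PB A.Q) → Prop
  | (_, PB.atom q), (σ, b) => ∃ a : Sig, σ = some a ∧ b = A.delta q a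
  | (_, PB.and b b'), (σ, c) => σ = none ∧ (c = b ∨ c = b')
  | (_, PB.or b b'), (σ, c) => σ = none ∧ (c = b ∨ c = b')

/-- Eve's letter game: Adam picks the letters and resolves conjunctions, Eve resolves
disjunctions. Eve wins a play iff the word played is not in `L(A)` or the state-sequence
satisfies the acceptance condition. -/
def eveLetterGame (A : AltAutomaton Sig Gam) : Game (Option Sig × PB A.Q) where
  move := letterMove A
  eve := fun p => match p.2 with
    | PB.or _ _ => True
    | _ => False
  init := (none, PB.atom A.init)
  win := fun p => ∀ (w : ℕ → Sig) (ρ : ℕ → A.Q),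
    IsSubseqOn (fun x => x.1) p w → IsSubseqOn (fun x => x.2.theAtom?) p ρ →
    (w ∉ A.lang ∨ (fun n => A.label (ρ n)) ∈ A.W)

/-- Adam's letter game: Eve picks the letters and resolves disjunctions, Adam resolves
conjunctions. Adam wins a play iff the word played is in `L(A)` or the state-sequence does
not satisfy the acceptance condition (stated below as Eve's winning condition, negated). -/
def adamLetterGame (A : AltAutomaton Sig Gam) : Game (Option Sig × PB A.Q) where
  move := letterMove A
  eve := fun p => match p.2 with
    | PB.and _ _ => False
    | _ => True
  init := (none, PB.atom A.init)
  win := fun p => ∀ (w : ℕ → Sig) (ρ : ℕ → A.Q),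
    IsSubseqOn (fun x => x.1) p w → IsSubseqOn (fun x => x.2.theAtom?) p ρ →
    (w ∉ A.lang ∧ (fun n => A.label (ρ n)) ∈ A.W)

/-- The strategy in a letter game induced by following the uniform strategy `τ`. -/
def letterFollow (A : AltAutomaton Sig Gam) (τ : UStrat Sig A.Q)
    (hs : List (Option Sig × PB A.Q)) : Option Sig × PB A.Q :=
  (none, τ (hs.filterMap Prod.fst) (hs.map Prod.snd))

/-- The nondeterminism in `A` is compliant with the letter games. -/
def NondetCompliant (A : AltAutomaton Sig Gam) : Prop := (eveLetterGame A).EveWins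

/-- The universality in `A` is compliant with the letter games. -/
def UnivCompliant (A : AltAutomaton Sig Gam) : Prop := (adamLetterGame A).AdamWins

/-- `A` is compliant with the letter games. -/
def LetterCompliant (A : AltAutomaton Sig Gam) : Prop := NondetCompliant A ∧ UnivCompliant A

/-- A `Sig`-arena. -/
structure Arena (Sig : Type) : Type 1 where
  V : Type
  X : V → V → Prop
  VE : V → Prop
  C : V → Sig
  v0 : V
  total : ∀ v, ∃ v', X v v'

/-- The game on the arena `R` with winning condition `L`. -/
def arenaGame (R : Arena Sig) (L : Set (ℕ → Sig)) : Game R.V where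
  move := R.X
  eve := R.VE
  init := R.v0
  win := fun p => (fun n => R.C (p n)) ∈ L

/-- Moves of the synchronized product `R × A`. -/
def prodMove (R : Arena Sig) (A : AltAutomaton Sig Gam) :
    (R.V × PB A.Q) → (R.V × PB A.Q) → Prop
  | (v, PB.atom q), (v', b) => R.X v v' ∧ b = A.delta q (R.C v')
  | (v, PB.and b b'), (v', c) => v' = v ∧ (c = b ∨ c = b')
  | (v, PB.or b b'), (v', c) => v' = v ∧ (c = b ∨ c = b')

/-- The synchronized product game `R × A`. -/
def prodGame (R : Arena Sig) (A : AltAutomaton Sig Gam) : Game (R.V × PB A.Q) where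
  move := prodMove R A
  eve := fun p => match p.2 with
    | PB.atom _ => R.VE p.1
    | PB.or _ _ => True
    | PB.and _ _ => False
  init := (R.v0, A.delta A.init (R.C R.v0))
  win := fun p => ∀ ρ : ℕ → A.Q, IsSubseqOn (fun x => x.2.theAtom?) p ρ →
    (fun n => A.label (ρ n)) ∈ A.W

/-- `A` is good for game composition. -/
def GoodForGames (A : AltAutomaton Sig Gam) : Prop :=
  ∀ R : Arena Sig, ((arenaGame R A.lang).EveWins ↔ (prodGame R A).EveWins)

/-- The composition `B × A` of an automaton `B` with `Sig`-labeled states with the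
automaton `A` over `Sig`. -/
def compose {Sig' : Type} (B : AltAutomaton Sig' Sig) (A : AltAutomaton Sig Gam) :
    AltAutomaton Sig' Gam where
  Q := B.Q × A.Q
  init := (B.init, A.init)
  delta := fun p a => (B.delta p.1 a).bind fun qB' =>
    (A.delta p.2 (B.label qB')).bind fun qA' => PB.atom (qB', qA')
  label := fun p => A.label p.2
  W := A.W

/-- `A` is good for automata composition: composing with any alternating automaton `B`
whose acceptance condition is `L(A)` preserves the language. -/
def GoodForAutomata (A : AltAutomaton Sig Gam) : Prop :=
  ∀ (Sig' : Type) (B : AltAutomaton Sig' Sig), B.W = A.lang →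
    (compose B A).lang = B.lang

/-- The underlying graph of the arena is a tree rooted at the initial node: every node is
reached from the root by a unique path. -/
def Arena.IsTree (R : Arena Sig) : Prop :=
  ∀ v : R.V, ∃! l : List R.V,
    l.head? = some R.v0 ∧ l.getLast? = some v ∧ l.Chain' R.X

/-- The arena with ownership of positions reassigned. -/
def Arena.reassign (R : Arena Sig) (E : R.V → Prop) : Arena Sig :=
  { R with VE := E }

/-- A branch of (the tree underlying) an arena. -/
def Arena.Branch (R : Arena Sig) (p : ℕ → R.V) : Prop :=
  p 0 = R.v0 ∧ ∀ n, R.X (p n) (p (n + 1))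

/-- `R` is a one-player arena. -/
def Arena.OnePlayer (R : Arena Sig) : Prop := (∀ v, R.VE v) ∨ (∀ v, ¬ R.VE v)

/-- `A` is good for trees: its universal expansion accepts exactly the trees all of whose
branches are in `L(A)`, and its existential expansion accepts exactly the trees having a
branch in `L(A)`. -/
def GoodForTrees (A : AltAutomaton Sig Gam) : Prop :=
  ∀ R : Arena Sig, R.IsTree →
    (((prodGame (R.reassign fun _ => False) A).EveWins ↔
        ∀ p : ℕ → R.V, R.Branch p → (fun n => R.C (p n)) ∈ A.lang) ∧
     ((prodGame (R.reassign fun _ => True) A).EveWins ↔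
        ∃ p : ℕ → R.V, R.Branch p ∧ (fun n => R.C (p n)) ∈ A.lang))

/-- `A` is nondeterministic: all transition conditions are disjunctions of atoms. -/
def AltAutomaton.IsNondet (A : AltAutomaton Sig Gam) : Prop :=
  ∀ q a, (A.delta q a).IsDisj

/-- `A` is universal: all transition conditions are conjunctions of atoms. -/
def AltAutomaton.IsUniv (A : AltAutomaton Sig Gam) : Prop :=
  ∀ q a, (A.delta q a).IsConj

/-- `A` is deterministic: all transition conditions are atoms. -/
def AltAutomaton.IsDet (A : AltAutomaton Sig Gam) : Prop :=
  ∀ q a, (A.delta q a).IsAtom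

/-- The Büchi acceptance set over `Bool`-labelings: `true` occurs infinitely often. -/
def BuchiW : Set (ℕ → Bool) := {x | {n | x n = true}.Infinite}

/-- The co-Büchi acceptance set over `Bool`-labelings: `false` occurs finitely often. -/
def CoBuchiW : Set (ℕ → Bool) := {x | {n | x n = false}.Finite}

/-- The edge relation of the graph induced by the transition function. -/
def edgeRel (A : AltAutomaton Sig Gam) (q q' : A.Q) : Prop :=
  ∃ a, q' ∈ (A.delta q a).atomsOf

/-- A Büchi automaton (with `Bool` labels) is weak if in every strongly connected component
all states have the same label. -/
def IsWeak (A : AltAutomaton Sig Bool) : Prop :=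
  ∀ q q', Relation.ReflTransGen (edgeRel A) q q' → Relation.ReflTransGen (edgeRel A) q' q →
    A.label q = A.label q'

end GFG

/-!
The unravelling of an arena `R` into a tree covers `R`: its moves project to moves of `R`, and
moves of `R` lift. A covering of games transfers winning strategies both ways (push a strategy
down by projecting its moves, pull one up by lifting histories), so Eve wins on `R` iff she wins
on its unravelling, in the game with condition `L(A)` as well as in the product with `A`. When a
single player owns every node, Eve wins with condition `L` iff all (resp. some) branches have
their label word in `L`. Applied to unravellings, this turns goodness for trees into goodness for
one-player arenas. Conversely, trees owned by a single player are one-player arenas.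
-/

namespace List
variable {α : Type*}

theorem inits_concat (l : List α) (v : α) : (l ++ [v]).inits = l.inits ++ [l ++ [v]] := by
  simp [inits_append]

theorem head?_inits (l : List α) : l.inits.head? = some [] := by
  cases l <;> simp

theorem getLast?_inits (l : List α) : l.inits.getLast? = some l := by
  induction l using reverseRecOn <;> simp

theorem isChain_inits (l : List α) : l.inits.IsChain (fun a b => ∃ v, b = a ++ [v]) := by
  induction l using reverseRecOn with
  | nil => simp
  | append_singleton l v ih =>
    rw [inits_concat]
    exact isChain_append.2 ⟨ih, .singleton _, by simp [getLast?_inits]⟩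

theorem eq_inits_of_isChain {L : List (List α)} {l : List α} (h0 : L.head? = some [])
    (hlast : L.getLast? = some l) (hchain : L.IsChain (fun a b => ∃ v, b = a ++ [v])) :
    L = l.inits := by
  induction L using reverseRecOn generalizing l with
  | nil => simp at h0
  | append_singleton L m ih =>
    obtain rfl : m = l := by simpa using hlast
    cases hL : L.getLast? with
    | none =>
      obtain rfl := getLast?_eq_none_iff.1 hL
      obtain rfl : m = [] := by simpa using h0
      rfl
    | some l' =>
      have hne : L ≠ [] := by rintro rfl; simp at hL
      obtain ⟨hchainL, -, hlink⟩ := isChain_append.1 hchain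
      obtain ⟨v, rfl⟩ := hlink l' hL m rfl
      rw [ih (by rwa [head?_append_of_ne_nil _ hne] at h0) hL hchainL, inits_concat]

end List

namespace GFG

namespace Game
variable {Pos : Type}

theorem histOf_zero (p : ℕ → Pos) : histOf p 0 = [p 0] := rfl

theorem histOf_succ (p : ℕ → Pos) (n : ℕ) :
    histOf p (n + 1) = histOf p n ++ [p (n + 1)] := by
  simp [histOf, List.range_succ]

theorem getLast?_histOf (p : ℕ → Pos) (n : ℕ) : (histOf p n).getLast? = some (p n) := by
  cases n <;> simp [histOf_zero, histOf_succ]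

theorem length_histOf (p : ℕ → Pos) (n : ℕ) : (histOf p n).length = n + 1 := by
  simp [histOf]

theorem histOf_getLastD_eq {H : ℕ → List Pos} (d : Pos) (h0 : ∃ x, H 0 = [x])
    (hsucc : ∀ n, ∃ y, H (n + 1) = H n ++ [y]) (n : ℕ) :
    histOf (fun k => (H k).getLast?.getD d) n = H n := by
  induction n with
  | zero => obtain ⟨x, hx⟩ := h0; simp [histOf_zero, hx]
  | succ n ih => obtain ⟨y, hy⟩ := hsucc n; simp [histOf_succ, ih, hy]

section
variable (G : Game Pos)

theorem isHist_iff {l : List Pos} : G.IsHist l ↔ l.head? = some G.init ∧ l.IsChain G.move :=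
  Iff.rfl

theorem not_isHist_nil : ¬ G.IsHist [] := by simp [isHist_iff]

theorem isHist_singleton {x : Pos} : G.IsHist [x] ↔ x = G.init := by
  simp [isHist_iff]

theorem isHist_concat {l : List Pos} {x y : Pos} (hx : l.getLast? = some x) :
    G.IsHist (l ++ [y]) ↔ G.IsHist l ∧ G.move x y := by
  have hl : l ≠ [] := by rintro rfl; simp at hx
  simp [isHist_iff, List.head?_append_of_ne_nil _ hl, List.isChain_append, hx, and_assoc]

theorem isHist_histOf_iff {p : ℕ → Pos} {n : ℕ} :
    G.IsHist (histOf p n) ↔ p 0 = G.init ∧ ∀ m < n, G.move (p m) (p (m + 1)) := by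
  simp [isHist_iff, histOf, List.isChain_map, List.isChain_range_succ, List.head?_range]

theorem isPlay_iff_forall_isHist {p : ℕ → Pos} :
    G.IsPlay p ↔ ∀ n, G.IsHist (histOf p n) := by
  simp only [isHist_histOf_iff, IsPlay]
  exact ⟨fun h _ => ⟨h.1, fun m _ => h.2 m⟩,
    fun h => ⟨(h 0).1, fun m => (h (m + 1)).2 m m.lt_succ_self⟩⟩

end

variable {G : Game Pos}

theorem WinsEve.move {σ : List Pos → Pos} (hσ : G.WinsEve σ) {H : List Pos} {x : Pos}
    (hH : G.IsHist H) (hx : H.getLast? = some x) (he : G.eve x) : G.move x (σ H) := by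
  obtain ⟨l, rfl⟩ : ∃ l, H = l ++ [x] := ⟨H.dropLast, (List.dropLast_append_getLast? x hx).symm⟩
  exact hσ.1 l x hH he

theorem eveWins_iff_forall_play (hadam : ∀ x, ¬ G.eve x) :
    G.EveWins ↔ ∀ p, G.IsPlay p → G.win p :=
  ⟨fun ⟨_, hσ⟩ p hp => hσ.2 p hp fun _ hn => absurd hn (hadam _),
    fun h => ⟨fun _ => G.init, fun _ x _ hx => absurd hx (hadam x), fun p hp _ => h p hp⟩⟩

def strategyHist (G : Game Pos) (σ : List Pos → Pos) : ℕ → List Pos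
  | 0 => [G.init]
  | n + 1 => strategyHist G σ n ++ [σ (strategyHist G σ n)]

theorem exists_play_of_winsEve (heve : ∀ x, G.eve x) {σ : List Pos → Pos} (hσ : G.WinsEve σ) :
    ∃ p, G.IsPlay p ∧ G.win p := by
  set p := fun k => (G.strategyHist σ k).getLast?.getD G.init
  have hhist : ∀ n, histOf p n = G.strategyHist σ n :=
    histOf_getLastD_eq _ ⟨_, rfl⟩ fun _ => ⟨_, rfl⟩
  have hnext : ∀ n, p (n + 1) = σ (histOf p n) := fun n => by
    simp [p, strategyHist, hhist]
  have hplay : G.IsPlay p := by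
    refine (isPlay_iff_forall_isHist G).2 fun n => ?_
    induction n with
    | zero => exact (isHist_singleton G).2 rfl
    | succ n ih =>
      rw [histOf_succ, isHist_concat G (getLast?_histOf p n), hnext]
      exact ⟨ih, hσ.move ih (getLast?_histOf p n) (heve _)⟩
  exact ⟨p, hplay, hσ.2 p hplay fun n _ => hnext n⟩

theorem eveWins_iff_exists_play (heve : ∀ x, G.eve x) (htotal : ∀ x, ∃ y, G.move x y) :
    G.EveWins ↔ ∃ p, G.IsPlay p ∧ G.win p := by
  classical
  refine ⟨fun ⟨σ, hσ⟩ => exists_play_of_winsEve heve hσ, fun ⟨p, hp, hwin⟩ => ?_⟩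
  -- Eve follows `p` as long as the play has not left it, and moves anywhere otherwise.
  let σ : List Pos → Pos := fun H =>
    if H.getLast? = some (p (H.length - 1)) then p H.length
    else (htotal (H.getLast?.getD G.init)).choose
  refine ⟨σ, fun l x _ _ => ?_, fun q hq hagree => ?_⟩
  · by_cases hx : x = p l.length
    · simpa [σ, hx] using hp.2 l.length
    · simpa [σ, hx] using (htotal x).choose_spec
  · have hqp : q = p := funext fun n => by
      induction n with
      | zero => rw [hq.1, hp.1]
      | succ n ih =>
        rw [hagree n (heve _)]
        simp [σ, getLast?_histOf, length_histOf, ih]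
    exact hqp ▸ hwin

structure Cover {Pos' : Type} (G : Game Pos) (G' : Game Pos') where
  toFun : Pos → Pos'
  lift : Pos → Pos' → Pos
  map_init : toFun G.init = G'.init
  eve_iff : ∀ x, G.eve x ↔ G'.eve (toFun x)
  map_move : ∀ {x y}, G.move x y → G'.move (toFun x) (toFun y)
  move_lift : ∀ {x y'}, G'.move (toFun x) y' → G.move x (lift x y')
  toFun_lift : ∀ {x y'}, G'.move (toFun x) y' → toFun (lift x y') = y'
  win_iff : ∀ p, G.win p ↔ G'.win (toFun ∘ p)

namespace Cover
variable {Pos' : Type} {G' : Game Pos'} (c : G.Cover G')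

theorem isHist_map {H : List Pos} (hH : G.IsHist H) : G'.IsHist (H.map c.toFun) :=
  ⟨by rw [List.head?_map, hH.1, Option.map_some, c.map_init],
    (List.isChain_map _).2 (hH.2.imp fun _ _ => c.map_move)⟩

theorem isPlay_comp {p : ℕ → Pos} (hp : G.IsPlay p) : G'.IsPlay (c.toFun ∘ p) :=
  ⟨by simp [hp.1, c.map_init], fun n => c.map_move (hp.2 n)⟩

theorem eveWins_of_eveWins_base (c : G.Cover G') (h : G'.EveWins) : G.EveWins := by
  obtain ⟨σ', hσ'⟩ := h
  refine ⟨fun H => c.lift (H.getLast?.getD G.init) (σ' (H.map c.toFun)), ?_, ?_⟩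
  · intro l x hH hx
    have := hσ'.1 (l.map c.toFun) (c.toFun x) (by simpa using c.isHist_map hH)
      ((c.eve_iff x).1 hx)
    simpa using c.move_lift this
  · intro p hp hagree
    have hagree' : G'.AgreesE σ' (c.toFun ∘ p) := by
      intro n hn
      have hmove := hσ'.move (c.isHist_map ((isPlay_iff_forall_isHist G).1 hp n))
        (by simp [getLast?_histOf]) hn
      have hhist : (histOf p n).map c.toFun = histOf (c.toFun ∘ p) n := by simp [histOf]
      simp only [Function.comp_apply, hagree n ((c.eve_iff _).2 hn), getLast?_histOf,
        Option.getD_some]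
      rw [c.toFun_lift (hhist ▸ hmove), hhist]
    exact (c.win_iff p).2 (hσ'.2 _ (c.isPlay_comp hp) hagree')

-- Following `σ` whenever its move projects to `y` is what makes lifted plays agree with `σ`.
open scoped Classical in
noncomputable def liftNext (σ : List Pos → Pos) (L : List Pos) (y : Pos') : Pos :=
  match L.getLast? with
  | none => G.init
  | some x => if G.eve x ∧ c.toFun (σ L) = y then σ L else c.lift x y

noncomputable def liftHist (σ : List Pos → Pos) (h : List Pos') : List Pos :=
  h.foldl (fun L y => L ++ [c.liftNext σ L y]) []

theorem liftHist_concat (σ : List Pos → Pos) (h : List Pos') (y : Pos') :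
    c.liftHist σ (h ++ [y]) = c.liftHist σ h ++ [c.liftNext σ (c.liftHist σ h) y] := by
  simp [liftHist]

theorem isHist_liftHist {σ : List Pos → Pos} (hσ : G.WinsEve σ) {h : List Pos'}
    (hh : G'.IsHist h) : G.IsHist (c.liftHist σ h) ∧ (c.liftHist σ h).map c.toFun = h := by
  induction h using List.reverseRecOn with
  | nil => exact absurd hh (not_isHist_nil G')
  | append_singleton h y ih =>
    cases hlast : h.getLast? with
    | none =>
      obtain rfl := List.getLast?_eq_none_iff.1 hlast
      obtain rfl := (isHist_singleton G').1 hh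
      have hlift : c.liftHist σ [G'.init] = [G.init] := rfl
      rw [List.nil_append, hlift]
      exact ⟨(isHist_singleton G).2 rfl, by simp [c.map_init]⟩
    | some y₀ =>
      obtain ⟨hh, hmove⟩ := (isHist_concat G' hlast).1 hh
      obtain ⟨hL, hLmap⟩ := ih hh
      obtain ⟨x, hx, rfl⟩ : ∃ x, (c.liftHist σ h).getLast? = some x ∧ c.toFun x = y₀ := by
        rwa [← hLmap, List.getLast?_map, Option.map_eq_some_iff] at hlast
      have hnext : G.move x (c.liftNext σ (c.liftHist σ h) y) ∧
          c.toFun (c.liftNext σ (c.liftHist σ h) y) = y := by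
        simp only [liftNext, hx]
        split_ifs with hfollow
        · exact ⟨hσ.move hL hx hfollow.1, hfollow.2⟩
        · exact ⟨c.move_lift hmove, c.toFun_lift hmove⟩
      rw [c.liftHist_concat, isHist_concat G hx, List.map_append, hLmap]
      exact ⟨⟨hL, hnext.1⟩, by simp [hnext.2]⟩

theorem eveWins_base_of_eveWins (c : G.Cover G') (h : G.EveWins) : G'.EveWins := by
  obtain ⟨σ, hσ⟩ := h
  refine ⟨fun H => c.toFun (σ (c.liftHist σ H)), ?_, ?_⟩
  · intro l y hH hy
    obtain ⟨hL, hLmap⟩ := c.isHist_liftHist hσ hH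
    obtain ⟨x, hx, rfl⟩ : ∃ x, (c.liftHist σ (l ++ [y])).getLast? = some x ∧ c.toFun x = y := by
      have := congrArg List.getLast? hLmap
      rwa [List.getLast?_map, List.getLast?_concat, Option.map_eq_some_iff] at this
    exact c.map_move (hσ.move hL hx ((c.eve_iff x).2 hy))
  · intro p' hp' hagree
    have hlift := fun n => c.isHist_liftHist hσ ((isPlay_iff_forall_isHist G').1 hp' n)
    set p := fun k => (c.liftHist σ (histOf p' k)).getLast?.getD G.init
    have hhist : ∀ n, histOf p n = c.liftHist σ (histOf p' n) :=
      histOf_getLastD_eq _ ⟨G.init, by simp [histOf_zero, liftHist, liftNext]⟩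
        fun n => ⟨_, by rw [histOf_succ, liftHist_concat]⟩
    have hproj : c.toFun ∘ p = p' := funext fun n => by
      have := congrArg List.getLast? (hlift n).2
      rw [← hhist, List.getLast?_map, getLast?_histOf, getLast?_histOf] at this
      exact Option.some.inj this
    have hplay : G.IsPlay p := (isPlay_iff_forall_isHist G).2 fun n => hhist n ▸ (hlift n).1
    refine hproj ▸ (c.win_iff p).1 (hσ.2 p hplay fun n hn => ?_)
    have hy : p' (n + 1) = c.toFun (σ (histOf p n)) := by
      rw [hagree n (by simpa [← hproj] using (c.eve_iff _).1 hn), hhist]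
    have hnext : p (n + 1) = c.liftNext σ (histOf p n) (p' (n + 1)) := by
      simp [p, histOf_succ, liftHist_concat, hhist]
    simp [hnext, liftNext, getLast?_histOf, hn, hy]

theorem eveWins_iff (c : G.Cover G') : G.EveWins ↔ G'.EveWins :=
  ⟨c.eveWins_base_of_eveWins, c.eveWins_of_eveWins_base⟩

end Cover
end Game

namespace Arena
variable {Sig : Type}

theorem eveWins_iff_forall_branch (R : Arena Sig) (L : Set (ℕ → Sig)) (hadam : ∀ v, ¬ R.VE v) :
    (arenaGame R L).EveWins ↔ ∀ p, R.Branch p → (fun n => R.C (p n)) ∈ L :=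
  Game.eveWins_iff_forall_play hadam

theorem eveWins_iff_exists_branch (R : Arena Sig) (L : Set (ℕ → Sig)) (heve : ∀ v, R.VE v) :
    (arenaGame R L).EveWins ↔ ∃ p, R.Branch p ∧ (fun n => R.C (p n)) ∈ L :=
  Game.eveWins_iff_exists_play heve R.total

theorem reassign_eq_self (R : Arena Sig) {E : R.V → Prop} (h : ∀ v, E v ↔ R.VE v) :
    R.reassign E = R := by
  obtain rfl : E = R.VE := funext fun v => propext (h v)
  rfl

structure Cover (R' R : Arena Sig) where
  toFun : R'.V → R.V
  lift : R'.V → R.V → R'.V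
  map_v0 : toFun R'.v0 = R.v0
  VE_iff : ∀ v, R'.VE v ↔ R.VE (toFun v)
  C_eq : ∀ v, R'.C v = R.C (toFun v)
  map_X : ∀ {v w}, R'.X v w → R.X (toFun v) (toFun w)
  X_lift : ∀ {v w}, R.X (toFun v) w → R'.X v (lift v w)
  toFun_lift : ∀ {v w}, R.X (toFun v) w → toFun (lift v w) = w

namespace Cover
variable {R' R : Arena Sig} (c : R'.Cover R)

def arenaGameCover (L : Set (ℕ → Sig)) : (arenaGame R' L).Cover (arenaGame R L) where
  toFun := c.toFun
  lift := c.lift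
  map_init := c.map_v0
  eve_iff := c.VE_iff
  map_move := c.map_X
  move_lift := c.X_lift
  toFun_lift := c.toFun_lift
  win_iff p := by simp only [arenaGame, Function.comp_apply, c.C_eq]

def prodGameCover {Gam : Type} (A : AltAutomaton Sig Gam) :
    (prodGame R' A).Cover (prodGame R A) where
  toFun x := (c.toFun x.1, x.2)
  lift x y := match x.2 with
    | PB.atom _ => (c.lift x.1 y.1, y.2)
    | _ => (x.1, y.2)
  map_init := by simp [prodGame, c.map_v0, c.C_eq]
  eve_iff := by rintro ⟨v, _ | _ | _⟩ <;> simp [prodGame, c.VE_iff]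
  map_move := by
    rintro ⟨v, _ | _ | _⟩ ⟨w, b⟩ h
    · exact ⟨c.map_X h.1, h.2.trans (by rw [c.C_eq])⟩
    all_goals exact ⟨congrArg c.toFun h.1, h.2⟩
  move_lift := by
    rintro ⟨v, _ | _ | _⟩ ⟨w, b⟩ h
    · exact ⟨c.X_lift h.1, h.2.trans (by rw [c.C_eq, c.toFun_lift h.1])⟩
    all_goals exact ⟨rfl, h.2⟩
  toFun_lift := by
    rintro ⟨v, _ | _ | _⟩ ⟨w, b⟩ h
    · simp [c.toFun_lift h.1]
    all_goals simp [h.1]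
  win_iff _ := Iff.rfl

end Cover

open scoped Classical in
noncomputable def step (R : Arena Sig) (u v : R.V) : R.V :=
  if R.X u v then v else (R.total u).choose

theorem X_step (R : Arena Sig) (u v : R.V) : R.X u (R.step u v) := by
  unfold step
  split_ifs with h
  · exact h
  · exact (R.total u).choose_spec

theorem step_of_X (R : Arena Sig) {u v : R.V} (h : R.X u v) : R.step u v = v := by
  simp [step, h]

noncomputable def pathEnd (R : Arena Sig) (l : List R.V) : R.V := l.foldl R.step R.v0

theorem pathEnd_concat (R : Arena Sig) (l : List R.V) (v : R.V) :
    R.pathEnd (l ++ [v]) = R.step (R.pathEnd l) v :=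
  List.foldl_concat ..

/-- Every finite list is a node: `pathEnd` reads it as a path from the root, replacing illegal
steps, so the tree structure is plain extension by one element. -/
noncomputable def unravel (R : Arena Sig) : Arena Sig where
  V := List R.V
  X l l' := ∃ v, l' = l ++ [v]
  VE l := R.VE (R.pathEnd l)
  C l := R.C (R.pathEnd l)
  v0 := []
  total l := ⟨l ++ [R.v0], R.v0, rfl⟩

theorem unravel_isTree (R : Arena Sig) : R.unravel.IsTree := fun l =>
  ⟨l.inits, ⟨l.head?_inits, l.getLast?_inits, l.isChain_inits⟩,
    fun _ ⟨h0, hlast, hchain⟩ => List.eq_inits_of_isChain h0 hlast hchain⟩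

noncomputable def unravelCover (R : Arena Sig) : R.unravel.Cover R where
  toFun := R.pathEnd
  lift := fun (l : List R.V) v => l ++ [v]
  map_v0 := rfl
  VE_iff _ := Iff.rfl
  C_eq _ := rfl
  map_X := by
    rintro l _ ⟨v, rfl⟩
    exact R.pathEnd_concat l v ▸ R.X_step _ v
  X_lift _ := ⟨_, rfl⟩
  toFun_lift h := (R.pathEnd_concat _ _).trans (R.step_of_X h)

end Arena

theorem statement7_general {Sig Gam : Type} (A : AltAutomaton Sig Gam) :
    GoodForTrees A ↔
      ∀ R : Arena Sig, R.OnePlayer →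
        ((arenaGame R A.lang).EveWins ↔ (prodGame R A).EveWins) := by
  constructor
  · intro hA R hR
    have hU := hA R.unravel R.unravel_isTree
    rw [← (R.unravelCover.arenaGameCover A.lang).eveWins_iff,
      ← (R.unravelCover.prodGameCover A).eveWins_iff]
    rcases hR with heve | hadam
    · rw [R.unravel.eveWins_iff_exists_branch A.lang fun _ => heve _, ← hU.2,
        R.unravel.reassign_eq_self fun _ => iff_of_true trivial (heve _)]
    · rw [R.unravel.eveWins_iff_forall_branch A.lang fun _ => hadam _, ← hU.1,
        R.unravel.reassign_eq_self fun _ => iff_of_false id (hadam _)]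
  · intro hA R _
    exact ⟨(hA _ (Or.inr fun _ => id)).symm.trans
        (Arena.eveWins_iff_forall_branch _ _ fun _ => id),
      (hA _ (Or.inl fun _ => trivial)).symm.trans
        (Arena.eveWins_iff_exists_branch _ _ fun _ => trivial)⟩

/-- An alternating automaton is good for trees iff it is good for
composition with one-player games (possibly with infinite arenas). -/
theorem statement7 {Sig Gam : Type} [Fintype Sig] [Nonempty Sig] [Fintype Gam] [Nonempty Gam]
    (A : AltAutomaton Sig Gam) (hreg : OmegaRegular A.W) :
    GoodForTrees A ↔
      ∀ R : Arena Sig, R.OnePlayer →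
        ((arenaGame R A.lang).EveWins ↔ (prodGame R A).EveWins) :=
  statement7_general A

end GFG
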